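/- There exists a constant C, depending only on D and N, such that for all V, W ∈ ℝ^{D×D}, the map F_{V,W} : ℝ^{D×(N+1)} → ℝ^{D×(N+1)}, F_{V,W}(Z) = V·Z·softmax(ZᵀWZ), is differentiable at every Z, and its Fréchet derivative (as a linear operator on ℝ^{D×(N+1)} equipped with the Frobenius norm) has operator norm at most C·(1+‖Z‖_F²)²·(1+‖θ‖+‖θ‖²), where ‖θ‖ = √(‖V‖_F² + ‖W‖_F²). -/

import Mathlib

open Matrix

noncomputable section

/-- `D × (N+1)` real matrices with the Frobenius (Euclidean) norm. -/
abbrev Mat (D N : ℕ) : Type := EuclideanSpace ℝ (Fin D × Fin (N + 1))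

/-- Column-wise softmax of a matrix. -/
noncomputable def softmaxCol {n m : ℕ} (A : Matrix (Fin n) (Fin m) ℝ) :
    Matrix (Fin n) (Fin m) ℝ :=
  Matrix.of fun i j => Real.exp (A i j) / ∑ k, Real.exp (A k j)

/-- Frobenius norm of a matrix. -/
noncomputable def frobM {n m : ℕ} (Z : Matrix (Fin n) (Fin m) ℝ) : ℝ :=
  Real.sqrt (∑ i, ∑ j, Z i j ^ 2)

/-- View a Euclidean element as a matrix. -/
noncomputable def toMat {D N : ℕ} (Z : Mat D N) : Matrix (Fin D) (Fin (N + 1)) ℝ :=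
  Matrix.of fun i j => Z (i, j)

/-- View a matrix as a Euclidean element. -/
noncomputable def ofMat {D N : ℕ} (A : Matrix (Fin D) (Fin (N + 1)) ℝ) : Mat D N :=
  (WithLp.equiv 2 (Fin D × Fin (N + 1) → ℝ)).symm fun q => A q.1 q.2

/-- The softmax self-attention encoder `Z ↦ V Z softmax(Zᵀ W Z)`, as a map on Euclidean space
(so that `‖·‖` is the Frobenius norm and operator norms of Fréchet derivatives are ℓ²-ℓ²
operator norms). -/
noncomputable def attnF {D N : ℕ} (V W : Matrix (Fin D) (Fin D) ℝ) (Z : Mat D N) : Mat D N :=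
  ofMat (V * toMat Z * softmaxCol ((toMat Z)ᵀ * W * toMat Z))

/-!
Write `attnF V W Z = V Z S(Zᵀ W Z)` with `S` the column softmax. For the Frobenius norm, matrix
multiplication is a bilinear map of norm at most one, so the product rule bounds the derivative
by `‖V‖ ‖S‖ + ‖V‖ ‖Z‖ ‖DS‖ ‖D(Zᵀ W Z)‖`, and `‖D(Zᵀ W Z)‖ ≤ 2 ‖W‖ ‖Z‖`. The softmax and its
Jacobian are bounded independently of their argument because the columns of `S` are probability
vectors: its entries lie in `[0, 1]`, and `dS_ij = S_ij (dX_ij - ∑ k, S_kj dX_kj)` is at most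
`2 ‖dX‖` in absolute value. Hence the derivative has norm at most
`(N + 1) ‖V‖ (1 + 4 ‖W‖ ‖Z‖²)`, which the stated polynomial dominates since `‖V‖, ‖W‖ ≤ ‖θ‖`.
-/

section BilinearDerivative

open ContinuousLinearMap

variable {𝕜 E F G H : Type*} [NontriviallyNormedField 𝕜] [NormedAddCommGroup E]
  [NormedSpace 𝕜 E] [NormedAddCommGroup F] [NormedSpace 𝕜 F] [NormedAddCommGroup G]
  [NormedSpace 𝕜 G] [NormedAddCommGroup H] [NormedSpace 𝕜 H]

theorem ContinuousLinearMap.norm_fderiv_of_bilinear_le (B : E →L[𝕜] F →L[𝕜] G) {f : H → E}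
    {g : H → F} {x : H} (hf : DifferentiableAt 𝕜 f x) (hg : DifferentiableAt 𝕜 g x) :
    ‖fderiv 𝕜 (fun y => B (f y) (g y)) x‖ ≤
      ‖B‖ * (‖f x‖ * ‖fderiv 𝕜 g x‖ + ‖fderiv 𝕜 f x‖ * ‖g x‖) := by
  rw [B.fderiv_of_bilinear hf hg, mul_add, ← mul_assoc, ← mul_assoc]
  exact norm_add_le_of_le
    ((precompR H B).le_of_opNorm₂_le_of_le (norm_precompR_le H B) le_rfl le_rfl)
    ((precompL H B).le_of_opNorm₂_le_of_le (norm_precompL_le H B) le_rfl le_rfl)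

theorem ContinuousLinearMap.norm_fderiv_of_bilinear_diag_le (B : E →L[𝕜] E →L[𝕜] G) (x : E) :
    ‖fderiv 𝕜 (fun y => B y y) x‖ ≤ 2 * ‖B‖ * ‖x‖ := by
  have hid : ‖fderiv 𝕜 (fun y : E => y) x‖ ≤ 1 := by
    rw [fderiv_fun_id]
    exact norm_id_le
  calc ‖fderiv 𝕜 (fun y => B y y) x‖
      ≤ ‖B‖ * (‖x‖ * ‖fderiv 𝕜 (fun y : E => y) x‖ + ‖fderiv 𝕜 (fun y : E => y) x‖ * ‖x‖) :=
        B.norm_fderiv_of_bilinear_le differentiableAt_id differentiableAt_id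
    _ ≤ ‖B‖ * (‖x‖ * 1 + 1 * ‖x‖) := by gcongr
    _ = 2 * ‖B‖ * ‖x‖ := by ring

end BilinearDerivative

namespace EuclideanSpace

theorem norm_le_sqrt_card_mul {ι : Type*} [Fintype ι] (x : EuclideanSpace ℝ ι) {c : ℝ}
    (hc : 0 ≤ c) (h : ∀ i, |x i| ≤ c) : ‖x‖ ≤ √(Fintype.card ι) * c := by
  rw [EuclideanSpace.norm_eq, ← Real.sqrt_sq hc, ← Real.sqrt_mul (Nat.cast_nonneg _)]
  gcongr
  calc ∑ i, ‖x i‖ ^ 2 ≤ ∑ _i : ι, c ^ 2 := by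
        gcongr with i
        rw [Real.norm_eq_abs]
        exact h i
    _ = _ := by simp

section MatrixProduct

variable {l m n : Type*}

def toMatrix : EuclideanSpace ℝ (m × n) ≃ₗ[ℝ] Matrix m n ℝ where
  toFun Z := Matrix.of fun i j => Z (i, j)
  invFun A := WithLp.toLp 2 fun q => A q.1 q.2
  map_add' _ _ := rfl
  map_smul' _ _ := rfl
  left_inv _ := rfl
  right_inv _ := rfl

@[simp] theorem toMatrix_apply (Z : EuclideanSpace ℝ (m × n)) (i : m) (j : n) :
    toMatrix Z i j = Z (i, j) := rfl

variable [Fintype l] [Fintype m] [Fintype n]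

theorem norm_eq_sqrt_sum_sum (Z : EuclideanSpace ℝ (m × n)) :
    ‖Z‖ = √(∑ i, ∑ j, Z (i, j) ^ 2) := by
  simp [EuclideanSpace.norm_eq, Fintype.sum_prod_type]

open scoped Matrix.Norms.Frobenius in
theorem norm_eq_frobenius_norm_toMatrix (Z : EuclideanSpace ℝ (m × n)) :
    ‖Z‖ = ‖toMatrix Z‖ := by
  simp [norm_eq_sqrt_sum_sum, Matrix.frobenius_norm_def, Real.sqrt_eq_rpow]

open scoped Matrix.Norms.Frobenius in
theorem norm_toMatrix_symm_mul_le (A : EuclideanSpace ℝ (l × m))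
    (B : EuclideanSpace ℝ (m × n)) :
    ‖toMatrix.symm (toMatrix A * toMatrix B)‖ ≤ ‖A‖ * ‖B‖ := by
  simp only [norm_eq_frobenius_norm_toMatrix, LinearEquiv.apply_symm_apply]
  exact Matrix.frobenius_norm_mul _ _

def matMul :
    EuclideanSpace ℝ (l × m) →L[ℝ] EuclideanSpace ℝ (m × n) →L[ℝ] EuclideanSpace ℝ (l × n) :=
  (((mulLinearMap ℝ).compl₁₂ toMatrix.toLinearMap toMatrix.toLinearMap).compr₂
    toMatrix.symm.toLinearMap).mkContinuous₂ 1 fun A B => by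
      simpa using norm_toMatrix_symm_mul_le A B

theorem norm_matMul_le :
    ‖(matMul : EuclideanSpace ℝ (l × m) →L[ℝ] EuclideanSpace ℝ (m × n) →L[ℝ]
      EuclideanSpace ℝ (l × n))‖ ≤ 1 :=
  LinearMap.mkContinuous₂_norm_le _ zero_le_one _

theorem norm_matMul_apply_le (A : EuclideanSpace ℝ (l × m)) (B : EuclideanSpace ℝ (m × n)) :
    ‖matMul A B‖ ≤ ‖A‖ * ‖B‖ := by
  have h := (matMul (l := l) (m := m) (n := n)).le_of_opNorm₂_le_of_le norm_matMul_le
    (le_refl ‖A‖) (le_refl ‖B‖)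
  rwa [one_mul] at h

theorem norm_matMul_left_le (A : EuclideanSpace ℝ (l × m)) :
    ‖(matMul A : EuclideanSpace ℝ (m × n) →L[ℝ] EuclideanSpace ℝ (l × n))‖ ≤ ‖A‖ :=
  ((matMul (l := l) (m := m) (n := n)).le_opNorm A).trans
    (mul_le_of_le_one_left (norm_nonneg A) norm_matMul_le)

def transpose : EuclideanSpace ℝ (m × n) ≃ₗᵢ[ℝ] EuclideanSpace ℝ (n × m) :=
  LinearIsometryEquiv.piLpCongrLeft 2 ℝ ℝ (Equiv.prodComm m n)

variable {m' k : Type*} [Fintype m'] [Fintype k]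

def transposeMulMul (W : EuclideanSpace ℝ (m × m')) :
    EuclideanSpace ℝ (m × n) →L[ℝ] EuclideanSpace ℝ (m' × k) →L[ℝ] EuclideanSpace ℝ (n × k) :=
  (matMul.comp (matMul.flip W)).comp (transpose (m := m) (n := n)).toContinuousLinearMap

theorem transposeMulMul_apply (W : EuclideanSpace ℝ (m × m'))
    (X : EuclideanSpace ℝ (m × n)) (Y : EuclideanSpace ℝ (m' × k)) :
    transposeMulMul W X Y = matMul (matMul (transpose X) W) Y := rfl

theorem norm_transposeMulMul_le (W : EuclideanSpace ℝ (m × m')) :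
    ‖(transposeMulMul W : EuclideanSpace ℝ (m × n) →L[ℝ] EuclideanSpace ℝ (m' × k) →L[ℝ]
      EuclideanSpace ℝ (n × k))‖ ≤ ‖W‖ :=
  ContinuousLinearMap.opNorm_le_bound₂ _ (norm_nonneg W) fun X Y =>
    calc ‖transposeMulMul W X Y‖ ≤ ‖transpose X‖ * ‖W‖ * ‖Y‖ := by
          rw [transposeMulMul_apply]
          exact (norm_matMul_apply_le _ _).trans (by gcongr; exact norm_matMul_apply_le _ _)
      _ = ‖W‖ * ‖X‖ * ‖Y‖ := by rw [LinearIsometryEquiv.norm_map]; ring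

end MatrixProduct

theorem norm_toMatrix_symm {n m : ℕ} (A : Matrix (Fin n) (Fin m) ℝ) :
    ‖toMatrix.symm A‖ = frobM A := by
  rw [norm_eq_sqrt_sum_sum]
  rfl

section ColumnSoftmax

variable {n m : ℕ}

def colSoftmax (X : EuclideanSpace ℝ (Fin n × Fin m)) : EuclideanSpace ℝ (Fin n × Fin m) :=
  toMatrix.symm (softmaxCol (toMatrix X))

theorem colSoftmax_apply (X : EuclideanSpace ℝ (Fin n × Fin m)) (i : Fin n) (j : Fin m) :
    colSoftmax X (i, j) = Real.exp (X (i, j)) / ∑ k, Real.exp (X (k, j)) := rfl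

variable [NeZero n]

theorem sum_exp_pos (X : EuclideanSpace ℝ (Fin n × Fin m)) (j : Fin m) :
    0 < ∑ k, Real.exp (X (k, j)) :=
  Finset.sum_pos (fun _ _ => Real.exp_pos _) Finset.univ_nonempty

theorem colSoftmax_nonneg (X : EuclideanSpace ℝ (Fin n × Fin m)) (q : Fin n × Fin m) :
    0 ≤ colSoftmax X q :=
  div_nonneg (Real.exp_pos _).le (sum_exp_pos X q.2).le

theorem sum_colSoftmax (X : EuclideanSpace ℝ (Fin n × Fin m)) (j : Fin m) :
    ∑ i, colSoftmax X (i, j) = 1 := by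
  simp only [colSoftmax_apply, ← Finset.sum_div]
  exact div_self (sum_exp_pos X j).ne'

theorem colSoftmax_le_one (X : EuclideanSpace ℝ (Fin n × Fin m)) (q : Fin n × Fin m) :
    colSoftmax X q ≤ 1 := by
  rw [← sum_colSoftmax X q.2]
  exact Finset.single_le_sum (f := fun i => colSoftmax X (i, q.2))
    (fun i _ => colSoftmax_nonneg X _) (Finset.mem_univ q.1)

theorem abs_colSoftmax_le_one (X : EuclideanSpace ℝ (Fin n × Fin m)) (q : Fin n × Fin m) :
    |colSoftmax X q| ≤ 1 :=
  abs_le.2 ⟨by linarith [colSoftmax_nonneg X q], colSoftmax_le_one X q⟩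

theorem norm_colSoftmax_le (X : EuclideanSpace ℝ (Fin n × Fin m)) :
    ‖colSoftmax X‖ ≤ √(Fintype.card (Fin n × Fin m)) := by
  simpa using norm_le_sqrt_card_mul _ zero_le_one (abs_colSoftmax_le_one X)

theorem abs_sum_colSoftmax_mul_le (X B : EuclideanSpace ℝ (Fin n × Fin m)) (j : Fin m) :
    |∑ k, colSoftmax X (k, j) * B (k, j)| ≤ ‖B‖ :=
  calc |∑ k, colSoftmax X (k, j) * B (k, j)| ≤ ∑ k, colSoftmax X (k, j) * ‖B‖ := by
        refine (Finset.abs_sum_le_sum_abs _ _).trans (Finset.sum_le_sum fun k _ => ?_)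
        rw [abs_mul, abs_of_nonneg (colSoftmax_nonneg X _)]
        gcongr
        · exact colSoftmax_nonneg X _
        · exact Real.norm_eq_abs (B (k, j)) ▸ PiLp.norm_apply_le B (k, j)
    _ = ‖B‖ := by rw [← Finset.sum_mul, sum_colSoftmax, one_mul]

def colSoftmaxDerivₗ (X : EuclideanSpace ℝ (Fin n × Fin m)) :
    EuclideanSpace ℝ (Fin n × Fin m) →ₗ[ℝ] EuclideanSpace ℝ (Fin n × Fin m) where
  toFun B := WithLp.toLp 2 fun q =>
    colSoftmax X q * (B q - ∑ k, colSoftmax X (k, q.2) * B (k, q.2))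
  map_add' B C := by
    ext q
    simp only [PiLp.add_apply, mul_add, Finset.sum_add_distrib]
    ring
  map_smul' c B := by
    ext q
    simp only [PiLp.smul_apply, smul_eq_mul, RingHom.id_apply, mul_left_comm _ c,
      ← Finset.mul_sum]
    ring

theorem norm_colSoftmaxDerivₗ_le (X B : EuclideanSpace ℝ (Fin n × Fin m)) :
    ‖colSoftmaxDerivₗ X B‖ ≤ 2 * √(Fintype.card (Fin n × Fin m)) * ‖B‖ := by
  rw [mul_comm 2, mul_assoc]
  refine norm_le_sqrt_card_mul _ (by positivity) fun q => ?_
  calc |colSoftmax X q * (B q - ∑ k, colSoftmax X (k, q.2) * B (k, q.2))|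
      ≤ 1 * (|B q| + |∑ k, colSoftmax X (k, q.2) * B (k, q.2)|) := by
        rw [abs_mul]
        exact mul_le_mul (abs_colSoftmax_le_one X q) (abs_sub _ _) (abs_nonneg _) zero_le_one
    _ ≤ 1 * (‖B‖ + ‖B‖) := by
        gcongr
        · exact Real.norm_eq_abs (B q) ▸ PiLp.norm_apply_le B q
        · exact abs_sum_colSoftmax_mul_le X B q.2
    _ = 2 * ‖B‖ := by ring

def colSoftmaxDeriv (X : EuclideanSpace ℝ (Fin n × Fin m)) :
    EuclideanSpace ℝ (Fin n × Fin m) →L[ℝ] EuclideanSpace ℝ (Fin n × Fin m) :=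
  (colSoftmaxDerivₗ X).mkContinuous _ (norm_colSoftmaxDerivₗ_le X)

theorem norm_colSoftmaxDeriv_le (X : EuclideanSpace ℝ (Fin n × Fin m)) :
    ‖colSoftmaxDeriv X‖ ≤ 2 * √(Fintype.card (Fin n × Fin m)) :=
  LinearMap.mkContinuous_norm_le _ (by positivity) _

theorem hasFDerivAt_colSoftmax (X : EuclideanSpace ℝ (Fin n × Fin m)) :
    HasFDerivAt colSoftmax (colSoftmaxDeriv X) X := by
  rw [← hasFDerivWithinAt_univ, hasFDerivWithinAt_piLp]
  rintro ⟨i, j⟩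
  refine HasFDerivAt.hasFDerivWithinAt ?_
  have hcoord (q : Fin n × Fin m) :
      HasFDerivAt (fun Y : EuclideanSpace ℝ (Fin n × Fin m) => Y q)
        (PiLp.proj (𝕜 := ℝ) 2 (fun _ : Fin n × Fin m => ℝ) q) X :=
    PiLp.hasFDerivAt_apply 2 X q
  have hsum := HasFDerivAt.fun_sum fun k (_ : k ∈ Finset.univ) => (hcoord (k, j)).exp
  have hquot := (hcoord (i, j)).exp.mul
    ((hasDerivAt_inv (sum_exp_pos X j).ne').comp_hasFDerivAt X hsum)
  refine (hquot.congr_fderiv ?_).congr_of_eventuallyEq (.of_forall fun Y => ?_)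
  · ext B
    simp only [colSoftmaxDeriv, colSoftmaxDerivₗ, LinearMap.mkContinuous_apply,
      LinearMap.coe_mk, AddHom.coe_mk, ContinuousLinearMap.comp_apply,
      _root_.add_apply, _root_.smul_apply, _root_.sum_apply,
      PiLp.proj_apply, Function.comp_apply, smul_eq_mul, colSoftmax_apply, div_mul_eq_mul_div,
      ← Finset.sum_div]
    field_simp
    ring
  · simp [colSoftmax_apply, div_eq_mul_inv]

@[fun_prop] theorem differentiable_colSoftmax :
    Differentiable ℝ (colSoftmax : EuclideanSpace ℝ (Fin n × Fin m) → _) :=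
  fun X => (hasFDerivAt_colSoftmax X).differentiableAt

end ColumnSoftmax

section SelfAttention

variable {l d : Type*} [Fintype l] [Fintype d] {n : ℕ}

def selfAttention (V : EuclideanSpace ℝ (l × d)) (W : EuclideanSpace ℝ (d × d))
    (Z : EuclideanSpace ℝ (d × Fin n)) : EuclideanSpace ℝ (l × Fin n) :=
  matMul (matMul V Z) (colSoftmax (transposeMulMul W Z Z))

variable [NeZero n] (V : EuclideanSpace ℝ (l × d)) (W : EuclideanSpace ℝ (d × d))

theorem differentiable_selfAttention : Differentiable ℝ (selfAttention (n := n) V W) := by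
  unfold selfAttention
  fun_prop

theorem norm_fderiv_colSoftmax_scores_le (Z : EuclideanSpace ℝ (d × Fin n)) :
    ‖fderiv ℝ (fun Y => colSoftmax (transposeMulMul W Y Y)) Z‖ ≤
      2 * √(Fintype.card (Fin n × Fin n)) * (2 * ‖W‖ * ‖Z‖) := by
  have hscores : DifferentiableAt ℝ (fun Y => transposeMulMul W Y Y) Z := by fun_prop
  rw [fderiv_fun_comp Z (differentiable_colSoftmax _) hscores, (hasFDerivAt_colSoftmax _).fderiv]
  refine (ContinuousLinearMap.opNorm_comp_le _ _).trans ?_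
  gcongr
  · exact norm_colSoftmaxDeriv_le _
  · exact ((transposeMulMul (n := Fin n) (k := Fin n) W).norm_fderiv_of_bilinear_diag_le Z).trans
      (by gcongr; exact norm_transposeMulMul_le W)

theorem norm_fderiv_selfAttention_le (Z : EuclideanSpace ℝ (d × Fin n)) :
    ‖fderiv ℝ (selfAttention V W) Z‖ ≤
      √(Fintype.card (Fin n × Fin n)) * (‖V‖ * (1 + 4 * ‖W‖ * ‖Z‖ ^ 2)) := by
  set κ := √(Fintype.card (Fin n × Fin n))
  have hsoftmax : DifferentiableAt ℝ (fun Y => colSoftmax (transposeMulMul W Y Y)) Z := by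
    fun_prop
  calc ‖fderiv ℝ (fun Y => matMul (matMul V Y) (colSoftmax (transposeMulMul W Y Y))) Z‖
      ≤ ‖matMul (l := l) (m := Fin n) (n := Fin n)‖ *
          (‖matMul V Z‖ * ‖fderiv ℝ (fun Y => colSoftmax (transposeMulMul W Y Y)) Z‖
            + ‖fderiv ℝ (matMul V) Z‖ * ‖colSoftmax (transposeMulMul W Z Z)‖) :=
        matMul.norm_fderiv_of_bilinear_le (f := matMul V)
          (g := fun Y => colSoftmax (transposeMulMul W Y Y)) (matMul V).differentiableAt hsoftmax
    _ ≤ 1 * (‖V‖ * ‖Z‖ * (2 * κ * (2 * ‖W‖ * ‖Z‖)) + ‖V‖ * κ) := by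
        rw [(matMul V).fderiv]
        gcongr
        · exact norm_matMul_le
        · exact norm_matMul_apply_le V Z
        · exact norm_fderiv_colSoftmax_scores_le W Z
        · exact norm_matMul_left_le V
        · exact norm_colSoftmax_le _
    _ = κ * (‖V‖ * (1 + 4 * ‖W‖ * ‖Z‖ ^ 2)) := by ring

end SelfAttention

end EuclideanSpace

theorem attnF_eq_selfAttention {D N : ℕ} (V W : Matrix (Fin D) (Fin D) ℝ) :
    attnF (N := N) V W =
      EuclideanSpace.selfAttention (EuclideanSpace.toMatrix.symm V)
        (EuclideanSpace.toMatrix.symm W) := rfl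

theorem mul_one_add_le_five_mul {v w R : ℝ} (hv : 0 ≤ v) :
    v * (1 + 4 * w * R ^ 2) ≤
      5 * ((1 + R ^ 2) ^ 2 * (1 + √(v ^ 2 + w ^ 2) + √(v ^ 2 + w ^ 2) ^ 2)) := by
  set t := √(v ^ 2 + w ^ 2)
  have hvt : v ≤ t := Real.le_sqrt_of_sq_le (by nlinarith)
  have hwt : w ≤ t := Real.le_sqrt_of_sq_le (by nlinarith)
  have hvw : v * w ≤ t ^ 2 := by nlinarith
  have hR : R ^ 2 ≤ (1 + R ^ 2) ^ 2 := by nlinarith [sq_nonneg R]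
  have hR1 : 1 ≤ (1 + R ^ 2) ^ 2 := by nlinarith [sq_nonneg R]
  nlinarith [mul_le_mul hvw hR (sq_nonneg R) (sq_nonneg t), sq_nonneg t, sq_nonneg R,
    Real.sqrt_nonneg (v ^ 2 + w ^ 2)]

/-- differentiability and Jacobian operator-norm growth bound (condition (G3))
for the softmax self-attention encoder. -/
theorem stmt18 (D N : ℕ) :
    ∃ C : ℝ, 0 < C ∧
      ∀ V W : Matrix (Fin D) (Fin D) ℝ,
        Differentiable ℝ (attnF (D := D) (N := N) V W) ∧
        ∀ Z : Mat D N,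
          ‖fderiv ℝ (attnF V W) Z‖ ≤
            C * (1 + ‖Z‖ ^ 2) ^ 2 *
              (1 + Real.sqrt (frobM V ^ 2 + frobM W ^ 2) +
                Real.sqrt (frobM V ^ 2 + frobM W ^ 2) ^ 2) := by
  have hκ : 0 < √(Fintype.card (Fin (N + 1) × Fin (N + 1)) : ℝ) :=
    Real.sqrt_pos.2 (Nat.cast_pos.2 Fintype.card_pos)
  refine ⟨5 * √(Fintype.card (Fin (N + 1) × Fin (N + 1)) : ℝ), by positivity, fun V W => ?_⟩
  rw [attnF_eq_selfAttention]
  refine ⟨EuclideanSpace.differentiable_selfAttention _ _, fun Z =>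
    (EuclideanSpace.norm_fderiv_selfAttention_le _ _ Z).trans ?_⟩
  rw [EuclideanSpace.norm_toMatrix_symm, EuclideanSpace.norm_toMatrix_symm]
  have := mul_le_mul_of_nonneg_left
    (mul_one_add_le_five_mul (v := frobM V) (w := frobM W) (R := ‖Z‖) (Real.sqrt_nonneg _)) hκ.le
  linarith
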